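/- (Budur.) Let m = (m₁,…,m_r) ∈ ℕ^r be such that f₁^{m₁}⋯f_r^{m_r} is nonconstant. Then Exp(Z(B_F^m)) = ⋃_i Exp(Z(B_F^{e_i})), where the union is over all indices 1 ≤ i ≤ r with m_i ≠ 0 and f_i nonconstant, and e_i ∈ ℕ^r is the i-th standard basis vector. -/

import Mathlib

set_option synthInstance.maxHeartbeats 1000000
set_option maxHeartbeats 2000000
noncomputable section
open MvPolynomial

/-! ## The ring `R = ℂ[x₁,…,xₙ]`, its localization `R_f`, and the extension of `∂/∂xᵢ`
to `R_f` (constructed via the universal property of the localization, using dual numbers;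
this is the unique extension, given by the quotient rule). -/

variable {n r : ℕ}

/-- The ring homomorphism `R → R_f[ε]`, `a ↦ a + (∂a/∂xᵢ)ε`. -/
def BSpsi (f : MvPolynomial (Fin n) ℂ) (i : Fin n) :
    MvPolynomial (Fin n) ℂ →+* TrivSqZeroExt (Localization.Away f) (Localization.Away f) where
  toFun a := ⟨algebraMap _ _ a, algebraMap _ _ (pderiv i a)⟩
  map_one' := by
    refine TrivSqZeroExt.ext ?_ ?_ <;> simp
  map_mul' a b := by
    refine TrivSqZeroExt.ext ?_ ?_
    · exact (map_mul _ _ _)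
    · change algebraMap _ _ (pderiv i (a * b)) = algebraMap _ _ a • algebraMap _ _ (pderiv i b)
        + MulOpposite.op (algebraMap _ _ b) • algebraMap _ _ (pderiv i a)
      rw [pderiv_mul, map_add, map_mul, map_mul]
      simp [smul_eq_mul, MulOpposite.smul_eq_mul_unop]
      ring
  map_zero' := by
    refine TrivSqZeroExt.ext ?_ ?_ <;> simp
  map_add' a b := by
    refine TrivSqZeroExt.ext ?_ ?_
    · exact map_add (algebraMap (MvPolynomial (Fin n) ℂ) (Localization.Away f)) a b
    · change algebraMap _ _ (pderiv i (a + b)) = algebraMap _ _ (pderiv i a)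
        + algebraMap (MvPolynomial (Fin n) ℂ) (Localization.Away f) (pderiv i b)
      simp

lemma BSpsi_isUnit (f : MvPolynomial (Fin n) ℂ) (i : Fin n) : IsUnit (BSpsi f i f) := by
  rw [TrivSqZeroExt.isUnit_iff_isUnit_fst]
  exact IsLocalization.Away.algebraMap_isUnit f

/-- The lift of `BSpsi` to the localization `R_f → R_f[ε]`. -/
def BSPhi (f : MvPolynomial (Fin n) ℂ) (i : Fin n) :
    Localization.Away f →+* TrivSqZeroExt (Localization.Away f) (Localization.Away f) :=
  IsLocalization.Away.lift f (BSpsi_isUnit f i)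

lemma BSPhi_algebraMap (f : MvPolynomial (Fin n) ℂ) (i : Fin n) (a : MvPolynomial (Fin n) ℂ) :
    BSPhi f i (algebraMap _ _ a) = BSpsi f i a :=
  IsLocalization.lift_eq _ _

/-- The extension of `∂/∂xᵢ` to the localization `R_f = ℂ[x₁,…,xₙ][1/f]`
(the unique extension, given by the quotient rule), as a `ℂ`-linear endomorphism. -/
def BSderiv (f : MvPolynomial (Fin n) ℂ) (i : Fin n) :
    Module.End ℂ (Localization.Away f) where
  toFun z := (BSPhi f i z).snd
  map_add' x y := by simp
  map_smul' c z := by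
    simp only [RingHom.id_apply]
    rw [show c • z = algebraMap ℂ (Localization.Away f) c * z from Algebra.smul_def c z, map_mul]
    have h1 : algebraMap ℂ (Localization.Away f) c
        = algebraMap (MvPolynomial (Fin n) ℂ) (Localization.Away f) (C c) := by
      rw [IsScalarTower.algebraMap_apply ℂ (MvPolynomial (Fin n) ℂ) (Localization.Away f)]
      simp
    rw [h1, BSPhi_algebraMap]
    rw [TrivSqZeroExt.snd_mul]
    show (algebraMap _ _ (C c)) • _ + (MulOpposite.op (BSPhi f i z).fst)
      • (algebraMap _ _ (pderiv i (C c))) = _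
    simp [Algebra.smul_def, ← h1]

/-! ## The module `M = R_f ⊗_ℂ ℂ[s₁,…,s_r] = R_f[s₁,…,s_r]` and the operators on it. -/

/-- The module `M = R_f ⊗_ℂ ℂ[s₁,…,s_r]`, realized as polynomials in `s₁,…,s_r`
with coefficients in `R_f`. -/
abbrev BSModule (r : ℕ) (f : MvPolynomial (Fin n) ℂ) :=
  MvPolynomial (Fin r) (Localization.Away f)

/-- A `ℂ`-linear endomorphism of `R_f` applied coefficientwise to `M = R_f[s₁,…,s_r]`. -/
def coeffwise (f : MvPolynomial (Fin n) ℂ) (d : Module.End ℂ (Localization.Away f)) :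
    Module.End ℂ (BSModule r f) :=
  (AddMonoidAlgebra.coeffLinearEquiv ℂ).symm.toLinearMap ∘ₗ Finsupp.mapRange.linearMap d
    ∘ₗ (AddMonoidAlgebra.coeffLinearEquiv ℂ).toLinearMap

/-- The element `(∂f_j/∂xᵢ)/f_j` of `R_f`, where `f = f₁⋯f_r`:
it is the fraction with numerator `(∂f_j/∂xᵢ)·∏_{k≠j} f_k` and denominator `f`. -/
def BSdlog (F : Fin r → MvPolynomial (Fin n) ℂ) (i : Fin n) (j : Fin r) :
    Localization.Away (∏ k, F k) :=
  Localization.mk (pderiv i (F j) * ∏ k ∈ Finset.univ.erase j, F k)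
    ⟨∏ k, F k, Submonoid.mem_powers _⟩

/-- The operator `∇ᵢ` on `M = R_f[s₁,…,s_r]`, given by
`∇ᵢ(g) = ∂g/∂xᵢ + (∑_j s_j·(∂f_j/∂xᵢ)/f_j)·g`, i.e. the natural action of `∂/∂xᵢ`
on `g·f₁^{s₁}⋯f_r^{s_r}`. -/
def BSnabla (F : Fin r → MvPolynomial (Fin n) ℂ) (i : Fin n) :
    Module.End ℂ (BSModule r (∏ k, F k)) :=
  coeffwise _ (BSderiv (∏ k, F k) i)
    + LinearMap.mulLeft ℂ (∑ j, X j * C (BSdlog F i j))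

/-- The algebra `D[s] = D_X[s₁,…,s_r]` of operators on `M`: the subalgebra of
`ℂ`-linear endomorphisms of `M` generated by the multiplication operators by elements of `R`,
the multiplication operators by the variables `s_j`, and the operators `∇ᵢ`.
(As a `ℂ`-subalgebra it is generated by these; as a `ℂ[s₁,…,s_r]`-subalgebra it is generated
by the multiplications by elements of `R` together with the `∇ᵢ`.) -/
def BSDalg (F : Fin r → MvPolynomial (Fin n) ℂ) :
    Subalgebra ℂ (Module.End ℂ (BSModule r (∏ k, F k))) :=
  Algebra.adjoin ℂ
    ((Set.range fun a : MvPolynomial (Fin n) ℂ =>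
        LinearMap.mulLeft ℂ (C (algebraMap _ (Localization.Away (∏ k, F k)) a)))
      ∪ (Set.range fun j : Fin r => LinearMap.mulLeft ℂ (X j : BSModule r (∏ k, F k)))
      ∪ (Set.range fun i : Fin n => BSnabla F i))

/-- The Bernstein–Sato ideal `B_F^m ⊆ ℂ[s₁,…,s_r]` (as a subset): all polynomials `b`
such that `b·1` lies in the `D[s]`-submodule of `M` generated by `f₁^{m₁}⋯f_r^{m_r}`,
encoding the functional equation `b(s)·f₁^{s₁}⋯f_r^{s_r} = P·f₁^{s₁+m₁}⋯f_r^{s_r+m_r}`. -/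
def BSideal (F : Fin r → MvPolynomial (Fin n) ℂ) (m : Fin r → ℕ) :
    Set (MvPolynomial (Fin r) ℂ) :=
  {b | ∃ P ∈ BSDalg F,
    P (C (algebraMap _ (Localization.Away (∏ k, F k)) (∏ j, F j ^ m j)))
      = MvPolynomial.map (algebraMap ℂ (Localization.Away (∏ k, F k))) b}

/-- The zero locus in `ℂ^r` of a set of polynomials in `ℂ[s₁,…,s_r]`. -/
def zeroLoc (B : Set (MvPolynomial (Fin r) ℂ)) : Set (Fin r → ℂ) :=
  {α | ∀ b ∈ B, eval α b = 0}

/-- The map `Exp : ℂ^r → (ℂ^*)^r`, `α ↦ exp(2πiα)` componentwise. -/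
def ExpMap (α : Fin r → ℂ) : Fin r → ℂˣ :=
  fun j => Units.mk0 (Complex.exp (2 * Real.pi * Complex.I * α j)) (Complex.exp_ne_zero _)

end

/-!
Substituting `s ↦ s + a` turns `u(s)·f^s` into `T_a u·f^s` with `T_a u = u(s + a)·f^a`
(`BStwist F a`). Every `P ∈ D[s]` satisfies `Q ∘ T_a = T_a ∘ P` for some `Q ∈ D[s]`: on the
generators, `s_j` becomes `s_j + a_j` and the rest are unchanged. So functional equations
`b(s)·f^s = P·f^{s+a}` and `c(s)·f^s = Q·f^{s+a'}` combine to `c(s + a)·b(s) ∈ B_F^{a+a'}`, whence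
`Z(B_F^{a+a'}) ⊆ Z(B_F^a) ∪ (Z(B_F^{a'}) - a)`. As `Exp` is invariant under integer translations,
`Exp Z(B_F^{a+a'}) ⊆ Exp Z(B_F^a) ∪ Exp Z(B_F^{a'})`; peeling basis vectors off `m` gives one
inclusion. The other holds because `B_F^m ⊆ B_F^{e_i}` for `e_i ≤ m`. An index with `f_i` a nonzero
constant contributes nothing, since then `1 ∈ B_F^{e_i}`.
-/
namespace MvPolynomial

variable {σ A B : Type*} [CommSemiring A] [CommSemiring B]

noncomputable def shift (a : σ → A) : MvPolynomial σ A →ₐ[A] MvPolynomial σ A :=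
  aeval fun j => X j + C (a j)

@[simp] lemma shift_X (a : σ → A) (j : σ) : shift a (X j) = X j + C (a j) := aeval_X _ _

@[simp] lemma shift_C (a : σ → A) (c : A) : shift a (C c) = C c := (shift a).commutes c

lemma eval_shift (α a : σ → A) (p : MvPolynomial σ A) :
    eval α (shift a p) = eval (α + a) p := by
  induction p using MvPolynomial.induction_on with
  | C c => simp
  | add p q hp hq => simp [hp, hq]
  | mul_X p j hp => simp [hp]

lemma map_shift (φ : A →+* B) (a : σ → A) (p : MvPolynomial σ A) :
    map φ (shift a p) = shift (fun j => φ (a j)) (map φ p) := by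
  induction p using MvPolynomial.induction_on with
  | C c => simp
  | add p q hp hq => simp [hp, hq]
  | mul_X p j hp => simp [hp]

end MvPolynomial

section Derivation

variable {R A : Type*} [CommSemiring R] [CommRing A] [Algebra R A]

lemma Derivation.map_pow_of_map_eq_mul (D : Derivation R A A) {x y : A} (h : D x = y * x)
    (k : ℕ) : D (x ^ k) = k * y * x ^ k := by
  induction k with
  | zero => simp
  | succ k ih => rw [pow_succ, D.leibniz, ih, h, smul_eq_mul, smul_eq_mul]; push_cast; ring

lemma Derivation.map_prod_pow_of_map_eq_mul {ι : Type*} [DecidableEq ι] (D : Derivation R A A)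
    {x y : ι → A} (h : ∀ j, D (x j) = y j * x j) (s : Finset ι) (k : ι → ℕ) :
    D (∏ j ∈ s, x j ^ k j) = (∑ j ∈ s, k j * y j) * ∏ j ∈ s, x j ^ k j := by
  induction s using Finset.induction_on with
  | empty => simp
  | insert j s hj ih =>
    rw [Finset.prod_insert hj, D.leibniz, ih, D.map_pow_of_map_eq_mul (h j), Finset.sum_insert hj,
      smul_eq_mul, smul_eq_mul]
    ring

end Derivation

open MvPolynomial

variable {n r : ℕ}

section Derivative

variable (f : MvPolynomial (Fin n) ℂ) (i : Fin n)

lemma BSPhi_fst (z : Localization.Away f) : (BSPhi f i z).fst = z := by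
  have h : (TrivSqZeroExt.fstHom ℂ _ _).toRingHom.comp (BSPhi f i) = RingHom.id _ :=
    IsLocalization.ringHom_ext (Submonoid.powers f) <| RingHom.ext fun a => by
      change (BSPhi f i (algebraMap _ _ a)).fst = _
      rw [BSPhi_algebraMap]
      rfl
  exact RingHom.congr_fun h z

lemma BSderiv_algebraMap (p : MvPolynomial (Fin n) ℂ) :
    BSderiv f i (algebraMap _ _ p) = algebraMap _ _ (pderiv i p) := by
  change (BSPhi f i (algebraMap _ _ p)).snd = _
  rw [BSPhi_algebraMap]
  rfl

lemma BSderiv_mul (x y : Localization.Away f) :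
    BSderiv f i (x * y) = x * BSderiv f i y + y * BSderiv f i x := by
  change (BSPhi f i (x * y)).snd = x * (BSPhi f i y).snd + y * (BSPhi f i x).snd
  rw [map_mul, TrivSqZeroExt.snd_mul, BSPhi_fst, BSPhi_fst, smul_eq_mul,
    MulOpposite.smul_eq_mul_unop, MulOpposite.unop_op, mul_comm (BSPhi f i x).snd]

noncomputable def BSderivation : Derivation ℂ (Localization.Away f) (Localization.Away f) :=
  Derivation.mk' (BSderiv f i) (BSderiv_mul f i)

end Derivative

lemma BSderiv_algebraMap_eq_BSdlog_mul (F : Fin r → MvPolynomial (Fin n) ℂ) (i : Fin n)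
    (j : Fin r) :
    BSderiv (∏ k, F k) i (algebraMap _ _ (F j)) = BSdlog F i j * algebraMap _ _ (F j) := by
  rw [BSderiv_algebraMap, BSdlog, ← Localization.mk_one_eq_algebraMap,
    ← Localization.mk_one_eq_algebraMap, Localization.mk_mul, Localization.mk_eq_mk_iff,
    Localization.r_iff_exists]
  refine ⟨1, ?_⟩
  simp only [OneMemClass.coe_one, one_mul, mul_one]
  rw [← Finset.mul_prod_erase _ _ (Finset.mem_univ j)]
  ring

lemma BSderiv_prod_pow (F : Fin r → MvPolynomial (Fin n) ℂ) (i : Fin n) (a : Fin r → ℕ) :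
    BSderiv (∏ k, F k) i (algebraMap _ _ (∏ j, F j ^ a j))
      = (∑ j, a j * BSdlog F i j) * algebraMap _ _ (∏ j, F j ^ a j) := by
  simp only [map_prod, map_pow]
  exact (BSderivation _ i).map_prod_pow_of_map_eq_mul
    (BSderiv_algebraMap_eq_BSdlog_mul F i) _ a

section Coeffwise

variable (f : MvPolynomial (Fin n) ℂ) (d : Module.End ℂ (Localization.Away f))

@[simp] lemma coeff_coeffwise (v : BSModule r f) (k : Fin r →₀ ℕ) :
    coeff k (coeffwise f d v) = d (coeff k v) := rfl

lemma coeffwise_C (c : Localization.Away f) :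
    coeffwise f d (C c : BSModule r f) = C (d c) := by
  ext k
  simp only [coeff_coeffwise, coeff_C]
  split_ifs <;> simp

lemma coeffwise_map_mul (p : MvPolynomial (Fin r) ℂ) (u : BSModule r f) :
    coeffwise f d (map (algebraMap ℂ _) p * u) = map (algebraMap ℂ _) p * coeffwise f d u := by
  ext k
  simp only [coeff_coeffwise, coeff_mul, coeff_map, map_sum, ← Algebra.smul_def, map_smul]

lemma coeffwise_shift (a : Fin r → ℂ) (u : BSModule r f) :
    coeffwise f d (shift (fun j => algebraMap ℂ _ (a j)) u)
      = shift (fun j => algebraMap ℂ _ (a j)) (coeffwise f d u) := by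
  have h_monomial (k : Fin r →₀ ℕ) (c : Localization.Away f) :
      (monomial k c : BSModule r f) = map (algebraMap ℂ _) (monomial k 1) * C c := by
    rw [map_monomial, map_one, mul_comm, C_mul_monomial, mul_one]
  induction u using MvPolynomial.induction_on' with
  | add p q hp hq => simp only [map_add, hp, hq]
  | monomial k c =>
    rw [h_monomial, map_mul, ← map_shift, shift_C, coeffwise_map_mul, coeffwise_C,
      coeffwise_map_mul, coeffwise_C, map_mul, ← map_shift, shift_C]

lemma coeffwise_BSderiv_mul_C (i : Fin n) (v : BSModule r f) (g : Localization.Away f) :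
    coeffwise f (BSderiv f i) (v * C g)
      = coeffwise f (BSderiv f i) v * C g + v * C (BSderiv f i g) := by
  ext k
  simp only [coeff_coeffwise, coeff_add, mul_comm _ (C _), coeff_C_mul, BSderiv_mul]
  ring

end Coeffwise

section Twist

variable (F : Fin r → MvPolynomial (Fin n) ℂ)

lemma mulLeft_C_algebraMap_mem_BSDalg (h : MvPolynomial (Fin n) ℂ) :
    LinearMap.mulLeft ℂ (C (algebraMap _ (Localization.Away (∏ k, F k)) h)
      : BSModule r (∏ k, F k)) ∈ BSDalg F :=
  Algebra.subset_adjoin (Or.inl (Or.inl ⟨h, rfl⟩))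

lemma mulLeft_X_mem_BSDalg (j : Fin r) :
    LinearMap.mulLeft ℂ (X j : BSModule r (∏ k, F k)) ∈ BSDalg F :=
  Algebra.subset_adjoin (Or.inl (Or.inr ⟨j, rfl⟩))

lemma BSnabla_mem_BSDalg (i : Fin n) : BSnabla F i ∈ BSDalg F :=
  Algebra.subset_adjoin (Or.inr ⟨i, rfl⟩)

lemma BSDalg_map_mul {P : Module.End ℂ (BSModule r (∏ k, F k))} (hP : P ∈ BSDalg F)
    (c : MvPolynomial (Fin r) ℂ) (u : BSModule r (∏ k, F k)) :
    P (map (algebraMap ℂ _) c * u) = map (algebraMap ℂ _) c * P u := by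
  induction hP using Algebra.adjoin_induction generalizing u with
  | mem Q hQ =>
    rcases hQ with (⟨h, rfl⟩ | ⟨j, rfl⟩) | ⟨i, rfl⟩
    · simp only [LinearMap.mulLeft_apply]; ring
    · simp only [LinearMap.mulLeft_apply]; ring
    · simp only [BSnabla, LinearMap.add_apply, LinearMap.mulLeft_apply, coeffwise_map_mul]
      ring
  | algebraMap c' => simp only [Module.algebraMap_end_apply, mul_smul_comm]
  | add P₁ P₂ _ _ ih₁ ih₂ => simp only [LinearMap.add_apply, ih₁, ih₂, mul_add]
  | mul P₁ P₂ _ _ ih₁ ih₂ => simp only [Module.End.mul_apply, ih₁, ih₂]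

noncomputable def BStwist (a : Fin r → ℕ) (u : BSModule r (∏ k, F k)) :
    BSModule r (∏ k, F k) :=
  shift (fun j => algebraMap ℂ _ (a j : ℂ)) u * C (algebraMap _ _ (∏ j, F j ^ a j))

lemma shift_sum_X_mul_C_BSdlog (a : Fin r → ℕ) (i : Fin n) :
    shift (fun j => algebraMap ℂ (Localization.Away (∏ k, F k)) (a j : ℂ))
        (∑ j, X j * C (BSdlog F i j))
      = ∑ j, X j * C (BSdlog F i j) + C (∑ j, a j * BSdlog F i j) := by
  simp only [map_sum, map_mul, shift_X, shift_C, map_natCast, ← Finset.sum_add_distrib]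
  exact Finset.sum_congr rfl fun j _ => by ring

lemma BSnabla_BStwist (a : Fin r → ℕ) (i : Fin n) (u : BSModule r (∏ k, F k)) :
    BSnabla F i (BStwist F a u) = BStwist F a (BSnabla F i u) := by
  simp only [BSnabla, BStwist, LinearMap.add_apply, LinearMap.mulLeft_apply,
    coeffwise_BSderiv_mul_C, coeffwise_shift, BSderiv_prod_pow, map_add, map_mul,
    shift_sum_X_mul_C_BSdlog]
  ring

lemma exists_mem_BSDalg_comp_BStwist (a : Fin r → ℕ) {P : Module.End ℂ (BSModule r (∏ k, F k))}
    (hP : P ∈ BSDalg F) : ∃ Q ∈ BSDalg F, ∀ u, Q (BStwist F a u) = BStwist F a (P u) := by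
  induction hP using Algebra.adjoin_induction with
  | mem P hP =>
    rcases hP with (⟨h, rfl⟩ | ⟨j, rfl⟩) | ⟨i, rfl⟩
    · refine ⟨_, mulLeft_C_algebraMap_mem_BSDalg F h, fun u => ?_⟩
      simp only [BStwist, LinearMap.mulLeft_apply, map_mul, shift_C]
      ring
    · refine ⟨LinearMap.mulLeft ℂ (X j) + algebraMap ℂ _ (a j : ℂ),
        add_mem (mulLeft_X_mem_BSDalg F j) (Subalgebra.algebraMap_mem _ _), fun u => ?_⟩
      simp only [BStwist, LinearMap.add_apply, LinearMap.mulLeft_apply,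
        Module.algebraMap_end_apply, map_mul, shift_X]
      rw [← algebraMap_smul (Localization.Away (∏ k, F k)), ← C_mul']
      ring
    · exact ⟨BSnabla F i, BSnabla_mem_BSDalg F i, BSnabla_BStwist F a i⟩
  | algebraMap c =>
    exact ⟨algebraMap ℂ _ c, Subalgebra.algebraMap_mem _ c, fun u => by
      simp only [BStwist, Module.algebraMap_end_apply]
      rw [← algebraMap_smul (Localization.Away (∏ k, F k)) c u, map_smul, smul_mul_assoc,
        algebraMap_smul]⟩
  | add P₁ P₂ _ _ ih₁ ih₂ =>
    obtain ⟨Q₁, hQ₁, e₁⟩ := ih₁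
    obtain ⟨Q₂, hQ₂, e₂⟩ := ih₂
    exact ⟨Q₁ + Q₂, add_mem hQ₁ hQ₂, fun u => by
      rw [LinearMap.add_apply, e₁, e₂, LinearMap.add_apply]
      simp only [BStwist, map_add, add_mul]⟩
  | mul P₁ P₂ _ _ ih₁ ih₂ =>
    obtain ⟨Q₁, hQ₁, e₁⟩ := ih₁
    obtain ⟨Q₂, hQ₂, e₂⟩ := ih₂
    exact ⟨Q₁ * Q₂, mul_mem hQ₁ hQ₂, fun u => by simp only [Module.End.mul_apply, e₂, e₁]⟩

end Twist

section Ideal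

variable (F : Fin r → MvPolynomial (Fin n) ℂ)

lemma one_mem_BSideal_of_isUnit {a : Fin r → ℕ} (h : IsUnit (∏ j, F j ^ a j)) :
    1 ∈ BSideal F a := by
  obtain ⟨u, hu⟩ := h
  refine ⟨LinearMap.mulLeft ℂ (C (algebraMap _ _ (↑u⁻¹ : MvPolynomial (Fin n) ℂ))),
    mulLeft_C_algebraMap_mem_BSDalg F _, ?_⟩
  rw [LinearMap.mulLeft_apply, ← map_mul, ← map_mul, ← hu, Units.inv_mul, map_one, map_one,
    map_one]

lemma BSideal_subset_of_le {a m : Fin r → ℕ} (h : a ≤ m) : BSideal F m ⊆ BSideal F a := by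
  rintro b ⟨P, hP, hPb⟩
  refine ⟨P * LinearMap.mulLeft ℂ (C (algebraMap _ _ (∏ j, F j ^ (m j - a j)))),
    mul_mem hP (mulLeft_C_algebraMap_mem_BSDalg F _), ?_⟩
  rw [Module.End.mul_apply, LinearMap.mulLeft_apply, ← map_mul, ← map_mul,
    ← Finset.prod_mul_distrib]
  simp_rw [← pow_add, Nat.sub_add_cancel (h _)]
  exact hPb

lemma BStwist_C_prod_pow (a a' : Fin r → ℕ) :
    BStwist F a (C (algebraMap _ _ (∏ j, F j ^ a' j)))
      = C (algebraMap _ _ (∏ j, F j ^ (a + a') j)) := by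
  simp only [BStwist, shift_C, ← map_mul, ← Finset.prod_mul_distrib, Pi.add_apply, pow_add,
    mul_comm]

lemma shift_mul_mem_BSideal_add {a a' : Fin r → ℕ} {b c : MvPolynomial (Fin r) ℂ}
    (hb : b ∈ BSideal F a) (hc : c ∈ BSideal F a') :
    shift (fun j => (a j : ℂ)) c * b ∈ BSideal F (a + a') := by
  obtain ⟨P, hP, hPb⟩ := hb
  obtain ⟨Q, hQ, hQc⟩ := hc
  obtain ⟨Q', hQ', hQ'Q⟩ := exists_mem_BSDalg_comp_BStwist F a hQ
  refine ⟨P * Q', mul_mem hP hQ', ?_⟩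
  rw [Module.End.mul_apply, ← BStwist_C_prod_pow, hQ'Q, hQc, BStwist, ← map_shift,
    BSDalg_map_mul F hP, hPb, map_mul]

lemma zeroLoc_BSideal_add {a a' : Fin r → ℕ} {α : Fin r → ℂ}
    (hα : α ∈ zeroLoc (BSideal F (a + a'))) :
    α ∈ zeroLoc (BSideal F a) ∨ α + (fun j => (a j : ℂ)) ∈ zeroLoc (BSideal F a') := by
  simp only [zeroLoc, Set.mem_ofPred_eq] at hα ⊢
  by_contra! h
  obtain ⟨⟨b, hb, hαb⟩, ⟨c, hc, hαc⟩⟩ := h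
  have := hα _ (shift_mul_mem_BSideal_add F hb hc)
  rw [map_mul, eval_shift] at this
  exact mul_ne_zero hαc hαb this

lemma zeroLoc_BSideal_eq_empty_of_isUnit {a : Fin r → ℕ} (h : IsUnit (∏ j, F j ^ a j)) :
    zeroLoc (BSideal F a) = ∅ :=
  Set.eq_empty_of_forall_notMem fun α hα => by
    simpa using hα 1 (one_mem_BSideal_of_isUnit F h)

lemma zeroLoc_BSideal_single_eq_empty_of_isUnit {i : Fin r} (h : IsUnit (F i)) :
    zeroLoc (BSideal F (Pi.single i 1)) = ∅ :=
  zeroLoc_BSideal_eq_empty_of_isUnit F (by simpa [Pi.single_apply] using h)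

lemma zeroLoc_BSideal_mono {a m : Fin r → ℕ} (h : a ≤ m) :
    zeroLoc (BSideal F a) ⊆ zeroLoc (BSideal F m) :=
  fun _ hα b hb => hα b (BSideal_subset_of_le F h hb)

end Ideal

lemma ExpMap_add_intCast (α : Fin r → ℂ) (k : Fin r → ℤ) :
    ExpMap (α + fun j => (k j : ℂ)) = ExpMap α := by
  funext j
  ext
  simp only [ExpMap, Pi.add_apply, Units.val_mk0, mul_add, Complex.exp_add]
  rw [mul_comm _ (k j : ℂ), Complex.exp_int_mul_two_pi_mul_I, mul_one]

lemma Pi.single_one_le_of_ne_zero {ι : Type*} [DecidableEq ι] {a : ι → ℕ} {i : ι} (hi : a i ≠ 0) :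
    Pi.single i 1 ≤ a := fun j => by
  rcases eq_or_ne j i with rfl | hj
  · simpa [Nat.one_le_iff_ne_zero] using hi
  · simp [hj]

lemma Pi.sub_single_one_lt {ι : Type*} [DecidableEq ι] {a : ι → ℕ} {i : ι} (hi : a i ≠ 0) :
    a - Pi.single i 1 < a :=
  Pi.lt_def.mpr ⟨tsub_le_self, i, by simp only [Pi.sub_apply, Pi.single_eq_same]; omega⟩

section ExpImage

variable (F : Fin r → MvPolynomial (Fin n) ℂ)

lemma ExpMap_image_zeroLoc_BSideal_add_subset (a a' : Fin r → ℕ) :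
    ExpMap '' zeroLoc (BSideal F (a + a'))
      ⊆ ExpMap '' zeroLoc (BSideal F a) ∪ ExpMap '' zeroLoc (BSideal F a') := by
  rintro _ ⟨α, hα, rfl⟩
  rcases zeroLoc_BSideal_add F hα with h | h
  · exact Or.inl ⟨α, h, rfl⟩
  · exact Or.inr ⟨_, h, by simpa using ExpMap_add_intCast α fun j => (a j : ℤ)⟩

lemma ExpMap_image_zeroLoc_BSideal_subset (a : Fin r → ℕ) :
    ExpMap '' zeroLoc (BSideal F a)
      ⊆ ⋃ i ∈ {i | a i ≠ 0}, ExpMap '' zeroLoc (BSideal F (Pi.single i 1)) := by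
  induction a using WellFoundedLT.induction with
  | ind a ih =>
  by_cases ha : a = 0
  · rw [ha, zeroLoc_BSideal_eq_empty_of_isUnit F (by simp), Set.image_empty]
    exact Set.empty_subset _
  obtain ⟨i, hi⟩ : ∃ i, a i ≠ 0 := by
    by_contra! h
    exact ha (funext h)
  calc ExpMap '' zeroLoc (BSideal F a)
      = ExpMap '' zeroLoc (BSideal F (a - Pi.single i 1 + Pi.single i 1)) := by
        rw [tsub_add_cancel_of_le (Pi.single_one_le_of_ne_zero hi)]
    _ ⊆ ExpMap '' zeroLoc (BSideal F (a - Pi.single i 1))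
          ∪ ExpMap '' zeroLoc (BSideal F (Pi.single i 1)) :=
      ExpMap_image_zeroLoc_BSideal_add_subset F _ _
    _ ⊆ _ := by
      refine Set.union_subset ((ih _ (Pi.sub_single_one_lt hi)).trans ?_)
        (Set.subset_biUnion_of_mem (u := fun i => ExpMap '' zeroLoc (BSideal F (Pi.single i 1)))
          (show i ∈ {i | a i ≠ 0} from hi))
      refine Set.biUnion_subset_biUnion_left fun j hj => ?_
      simp only [Set.mem_ofPred_eq, Pi.sub_apply] at hj ⊢
      omega

end ExpImage

open MvPolynomial in
theorem exp_zero_locus_eq_union_over_standard_basis_vectors_general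
    {n r : ℕ}
    (F : Fin r → MvPolynomial (Fin n) ℂ) (hF : ∀ j, F j ≠ 0)
    (m : Fin r → ℕ) :
    ExpMap '' zeroLoc (BSideal F m)
      = ⋃ i ∈ {i : Fin r | m i ≠ 0 ∧ ∀ c : ℂ, F i ≠ C c},
          ExpMap '' zeroLoc (BSideal F (Pi.single i 1)) := by
  apply subset_antisymm
  · refine (ExpMap_image_zeroLoc_BSideal_subset F m).trans (Set.iUnion₂_subset fun i hi => ?_)
    by_cases hconst : ∀ c, F i ≠ C c
    · exact Set.subset_biUnion_of_mem (u := fun i => ExpMap '' zeroLoc (BSideal F (Pi.single i 1)))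
        (show i ∈ {i | m i ≠ 0 ∧ ∀ c : ℂ, F i ≠ C c} from ⟨hi, hconst⟩)
    obtain ⟨c, hc⟩ := not_forall_not.mp hconst
    have hc0 : c ≠ 0 := by
      rintro rfl
      exact hF i (by rw [hc, map_zero])
    have h_unit : IsUnit (F i) := hc ▸ (isUnit_iff_ne_zero.mpr hc0).map C
    simp [zeroLoc_BSideal_single_eq_empty_of_isUnit F h_unit]
  · exact Set.iUnion₂_subset fun i hi =>
      Set.image_mono (zeroLoc_BSideal_mono F (Pi.single_one_le_of_ne_zero hi.1))

open MvPolynomial in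
/-- **(Budur.)** For `m ∈ ℕ^r` with `f₁^{m₁}⋯f_r^{m_r}` nonconstant,
`Exp(Z(B_F^m)) = ⋃ᵢ Exp(Z(B_F^{eᵢ}))`, the union over all `i` with `mᵢ ≠ 0` and `fᵢ`
nonconstant, where `eᵢ` is the `i`-th standard basis vector of `ℕ^r`. -/
theorem exp_zero_locus_eq_union_over_standard_basis_vectors
    {n r : ℕ} (hn : 1 ≤ n) (hr : 1 ≤ r)
    (F : Fin r → MvPolynomial (Fin n) ℂ) (hF : ∀ j, F j ≠ 0)
    (m : Fin r → ℕ) (hm : ∀ c : ℂ, ∏ j, F j ^ m j ≠ C c) :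
    ExpMap '' zeroLoc (BSideal F m)
      = ⋃ i ∈ {i : Fin r | m i ≠ 0 ∧ ∀ c : ℂ, F i ≠ C c},
          ExpMap '' zeroLoc (BSideal F (Pi.single i 1)) :=
  exp_zero_locus_eq_union_over_standard_basis_vectors_general F hF m
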